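/- For k > 0, the function Ĉ(k,·) defined by Ĉ(k,c) = 1 - ∫₀^c (2k / Y_BS(k,u)²) du is convex on (0,1) and is an involution: Ĉ(k, Ĉ(k,c)) = c for all 0 < c < 1. -/

import Mathlib

open MeasureTheory Real Filter Asymptotics Set

/-- Standard normal density. -/
noncomputable def phi (z : ℝ) : ℝ := (Real.sqrt (2 * Real.pi))⁻¹ * Real.exp (-z ^ 2 / 2)

/-- Standard normal CDF. -/
noncomputable def Phi (x : ℝ) : ℝ := ∫ z in Set.Iic x, phi z

/-- Black–Scholes normalized call price. -/
noncomputable def CBS (k y : ℝ) : ℝ :=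
  if 0 < y then Phi (-k / y + y / 2) - Real.exp k * Phi (-k / y - y / 2)
  else max (1 - Real.exp k) 0

/-- Implied total standard deviation: inverse of `CBS k` on `[0,∞)`. -/
noncomputable def YBS (k c : ℝ) : ℝ := sInf {y : ℝ | 0 ≤ y ∧ CBS k y = c}

/-- Inverse of the standard normal CDF on (0,1). -/
noncomputable def PhiInv (u : ℝ) : ℝ := sInf {x : ℝ | u ≤ Phi x}

/-- Extended-real quantile with the convention `Φ⁻¹(u) = +∞` for `u ≥ 1`, `-∞` for `u ≤ 0`. -/
noncomputable def PhiInvE (u : ℝ) : EReal :=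
  if 1 ≤ u then ⊤ else if u ≤ 0 then ⊥ else ((PhiInv u : ℝ) : EReal)

/-!
Write `d₁,₂(k, y) = -k/y ± y/2` and `Ĉ(c) = C_BS(k, 2k / Y_BS(k, c))`. The vega of `C_BS` is
`φ(d₁)`, and `d₁(k, 2k/y) = -d₁(k, y)`; so in the chain rule for `Ĉ` the vega at `2k / Y_BS`
cancels the derivative `1 / φ(d₁)` of `Y_BS`, leaving `Ĉ' = -2k / Y_BS²`. As `c → 0⁺`,
`Y_BS → 0` and `Ĉ → 1`, hence `Ĉ(c) = 1 - ∫₀^c 2k / Y_BS²`, which is convex because `Y_BS` is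
increasing. Since `y ↦ 2k / y` is an involution, `Y_BS(Ĉ(c)) = 2k / Y_BS(c)`, and therefore
`Ĉ(Ĉ(c)) = C_BS(k, Y_BS(c)) = c`.
-/

open Topology ProbabilityTheory

lemma phi_eq_gaussianPDFReal : phi = gaussianPDFReal 0 1 := by
  ext z
  simp [phi, gaussianPDFReal]

lemma phi_pos (z : ℝ) : 0 < phi z := by
  unfold phi
  positivity

lemma phi_neg (z : ℝ) : phi (-z) = phi z := by
  simp [phi]

lemma continuous_phi : Continuous phi := by
  unfold phi
  fun_prop

lemma integrable_phi : Integrable phi := by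
  rw [phi_eq_gaussianPDFReal]
  exact integrable_gaussianPDFReal 0 1

lemma Phi_eq_cdf : Phi = cdf (gaussianReal 0 1) := by
  ext x
  rw [cdf_eq_real, measureReal_def, gaussianReal_apply_eq_integral _ one_ne_zero,
    ENNReal.toReal_ofReal (setIntegral_nonneg measurableSet_Iic fun z _ =>
      gaussianPDFReal_nonneg 0 1 z), Phi, phi_eq_gaussianPDFReal]

lemma hasDerivAt_Phi (x : ℝ) : HasDerivAt Phi (phi x) x := by
  have hPhi : Phi = fun t => Phi 0 + ∫ z in (0 : ℝ)..t, phi z := by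
    funext t
    rw [← intervalIntegral.integral_Iic_sub_Iic integrable_phi.integrableOn
      integrable_phi.integrableOn, Phi, Phi]
    ring
  rw [hPhi]
  exact (intervalIntegral.integral_hasDerivAt_right integrable_phi.intervalIntegrable
    (continuous_phi.stronglyMeasurableAtFilter _ _) continuous_phi.continuousAt).const_add _

lemma Phi_strictMono : StrictMono Phi :=
  strictMono_of_hasDerivAt_pos hasDerivAt_Phi phi_pos

lemma Phi_pos (x : ℝ) : 0 < Phi x :=
  calc 0 ≤ Phi (x - 1) := by rw [Phi_eq_cdf]; exact cdf_nonneg _ _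
    _ < Phi x := Phi_strictMono (by linarith)

lemma Phi_lt_one (x : ℝ) : Phi x < 1 :=
  calc Phi x < Phi (x + 1) := Phi_strictMono (by linarith)
    _ ≤ 1 := by rw [Phi_eq_cdf]; exact cdf_le_one _ _

lemma tendsto_Phi_atBot : Tendsto Phi atBot (𝓝 0) := by
  rw [Phi_eq_cdf]
  exact tendsto_cdf_atBot _

lemma tendsto_Phi_atTop : Tendsto Phi atTop (𝓝 1) := by
  rw [Phi_eq_cdf]
  exact tendsto_cdf_atTop _

lemma exp_mul_phi_d₂ {k y : ℝ} (hy : y ≠ 0) :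
    exp k * phi (-k / y - y / 2) = phi (-k / y + y / 2) := by
  unfold phi
  rw [mul_left_comm, ← exp_add]
  congr 2
  field_simp
  ring

lemma hasDerivAt_CBS (k : ℝ) {y : ℝ} (hy : 0 < y) :
    HasDerivAt (CBS k) (phi (-k / y + y / 2)) y := by
  have hinv : HasDerivAt (fun z : ℝ => -k / z) (k / y ^ 2) y :=
    ((hasDerivAt_inv hy.ne').const_mul (-k)).congr_deriv (by ring)
  have hd₁ : HasDerivAt (fun z => -k / z + z / 2) (k / y ^ 2 + 1 / 2) y :=
    hinv.add ((hasDerivAt_id' y).div_const 2)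
  have hd₂ : HasDerivAt (fun z => -k / z - z / 2) (k / y ^ 2 - 1 / 2) y :=
    hinv.sub ((hasDerivAt_id' y).div_const 2)
  have h₁ := (hasDerivAt_Phi _).comp y hd₁
  have h₂ := ((hasDerivAt_Phi _).comp y hd₂).const_mul (exp k)
  refine ((h₁.sub h₂).congr_deriv ?_).congr_of_eventuallyEq ?_
  · rw [← mul_assoc, exp_mul_phi_d₂ hy.ne']
    ring
  · filter_upwards [eventually_gt_nhds hy] with z hz
    simp [CBS, hz]

lemma CBS_strictMonoOn (k : ℝ) : StrictMonoOn (CBS k) (Ioi 0) :=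
  strictMonoOn_of_hasDerivWithinAt_pos (convex_Ioi 0)
    (fun _ hy => (hasDerivAt_CBS k hy).continuousAt.continuousWithinAt)
    (fun _ hy => (hasDerivAt_CBS k (interior_subset hy)).hasDerivWithinAt)
    (fun _ _ => phi_pos _)

lemma tendsto_CBS_nhdsGT_zero {k : ℝ} (hk : 0 < k) :
    Tendsto (CBS k) (𝓝[>] 0) (𝓝 0) := by
  have hhalf : Tendsto (fun y : ℝ => y / 2) (𝓝[>] 0) (𝓝 0) := by
    simpa using ((continuous_id.div_const 2).tendsto (0 : ℝ)).mono_left nhdsWithin_le_nhds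
  have hinv : Tendsto (fun y : ℝ => -k / y) (𝓝[>] 0) atBot :=
    (tendsto_neg_atTop_atBot.comp (tendsto_inv_nhdsGT_zero.const_mul_atTop hk)).congr
      fun y => by simp [div_eq_mul_inv]
  have h₁ := tendsto_Phi_atBot.comp (hinv.atBot_add hhalf)
  have h₂ := (tendsto_Phi_atBot.comp (hinv.atBot_add hhalf.neg)).const_mul (exp k)
  simpa only [mul_zero, sub_zero] using (h₁.sub h₂).congr' <| by
    filter_upwards [self_mem_nhdsWithin] with y (hy : 0 < y)
    simp [CBS, hy, sub_eq_add_neg]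

lemma tendsto_CBS_atTop (k : ℝ) : Tendsto (CBS k) atTop (𝓝 1) := by
  have hinv : Tendsto (fun y : ℝ => -k / y) atTop (𝓝 0) :=
    tendsto_const_nhds.div_atTop tendsto_id
  have hhalf : Tendsto (fun y : ℝ => y / 2) atTop atTop := tendsto_id.atTop_div_const two_pos
  have h₁ := tendsto_Phi_atTop.comp (hinv.add_atTop hhalf)
  have h₂ := (tendsto_Phi_atBot.comp (hinv.add_atBot (tendsto_neg_atTop_atBot.comp hhalf))).const_mul
    (exp k)
  simpa only [mul_zero, sub_zero] using (h₁.sub h₂).congr' <| by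
    filter_upwards [eventually_gt_atTop 0] with y hy
    simp [CBS, hy, sub_eq_add_neg]

lemma CBS_pos {k : ℝ} (hk : 0 < k) {y : ℝ} (hy : 0 < y) : 0 < CBS k y := by
  have hhalf : 0 ≤ CBS k (y / 2) := by
    refine le_of_tendsto (tendsto_CBS_nhdsGT_zero hk) ?_
    filter_upwards [Ioo_mem_nhdsGT (half_pos hy)] with z hz
    exact (CBS_strictMonoOn k).monotoneOn hz.1 (half_pos hy) hz.2.le
  exact hhalf.trans_lt (CBS_strictMonoOn k (half_pos hy) hy (half_lt_self hy))

lemma CBS_lt_one (k : ℝ) {y : ℝ} (hy : 0 < y) : CBS k y < 1 := by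
  have := mul_pos (exp_pos k) (Phi_pos (-k / y - y / 2))
  rw [CBS, if_pos hy]
  linarith [Phi_lt_one (-k / y + y / 2)]

lemma CBS_zero {k : ℝ} (hk : 0 < k) : CBS k 0 = 0 := by
  simp [CBS, (one_lt_exp_iff.mpr hk).le]

lemma CBS_mapsTo {k : ℝ} (hk : 0 < k) : MapsTo (CBS k) (Ioi 0) (Ioo 0 1) :=
  fun _ hy => ⟨CBS_pos hk hy, CBS_lt_one k hy⟩

lemma CBS_surjOn {k : ℝ} (hk : 0 < k) : SurjOn (CBS k) (Ioi 0) (Ioo 0 1) := by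
  intro c hc
  obtain ⟨a, hca, ha⟩ :=
    ((tendsto_CBS_nhdsGT_zero hk).eventually (eventually_lt_nhds hc.1)).and
      self_mem_nhdsWithin |>.exists
  obtain ⟨b, hcb, hab⟩ :=
    ((tendsto_CBS_atTop k).eventually (eventually_gt_nhds hc.2)).and
      (eventually_gt_atTop a) |>.exists
  have hcont : ContinuousOn (CBS k) (Icc a b) := fun y hy =>
    (hasDerivAt_CBS k (lt_of_lt_of_le ha hy.1)).continuousAt.continuousWithinAt
  obtain ⟨y, hy, rfl⟩ := intermediate_value_Icc hab.le hcont ⟨hca.le, hcb.le⟩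
  exact ⟨y, lt_of_lt_of_le ha hy.1, rfl⟩

lemma YBS_CBS {k : ℝ} (hk : 0 < k) {y : ℝ} (hy : 0 < y) : YBS k (CBS k y) = y := by
  have hset : {y' : ℝ | 0 ≤ y' ∧ CBS k y' = CBS k y} = {y} := by
    ext y'
    refine ⟨fun ⟨hy'₀, hy'⟩ => ?_, fun h => ⟨h ▸ hy.le, h ▸ rfl⟩⟩
    rcases hy'₀.lt_or_eq with hy'₀ | rfl
    · exact (CBS_strictMonoOn k).injOn hy'₀ hy hy'
    · exact absurd hy' ((CBS_zero hk).trans_lt (CBS_pos hk hy)).ne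
  rw [YBS, hset, csInf_singleton]

lemma YBS_pos {k : ℝ} (hk : 0 < k) {c : ℝ} (hc : c ∈ Ioo 0 1) : 0 < YBS k c := by
  obtain ⟨y, hy, rfl⟩ := CBS_surjOn hk hc
  rwa [YBS_CBS hk hy]

lemma CBS_YBS {k : ℝ} (hk : 0 < k) {c : ℝ} (hc : c ∈ Ioo 0 1) : CBS k (YBS k c) = c := by
  obtain ⟨y, hy, rfl⟩ := CBS_surjOn hk hc
  rw [YBS_CBS hk hy]

lemma YBS_surjOn {k : ℝ} (hk : 0 < k) : SurjOn (YBS k) (Ioo 0 1) (Ioi 0) :=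
  fun y hy => ⟨CBS k y, CBS_mapsTo hk hy, YBS_CBS hk hy⟩

lemma YBS_strictMonoOn {k : ℝ} (hk : 0 < k) : StrictMonoOn (YBS k) (Ioo 0 1) := by
  intro c hc c' hc' hlt
  rwa [← (CBS_strictMonoOn k).lt_iff_lt (YBS_pos hk hc) (YBS_pos hk hc'), CBS_YBS hk hc,
    CBS_YBS hk hc']

lemma continuousAt_YBS {k : ℝ} (hk : 0 < k) {c : ℝ} (hc : c ∈ Ioo 0 1) :
    ContinuousAt (YBS k) c :=
  (YBS_strictMonoOn hk).continuousAt_of_image_mem_nhds (isOpen_Ioo.mem_nhds hc)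
    (mem_of_superset (Ioi_mem_nhds (YBS_pos hk hc)) (YBS_surjOn hk))

lemma hasDerivAt_YBS {k : ℝ} (hk : 0 < k) {c : ℝ} (hc : c ∈ Ioo 0 1) :
    HasDerivAt (YBS k) (phi (-k / YBS k c + YBS k c / 2))⁻¹ c :=
  (hasDerivAt_CBS k (YBS_pos hk hc)).of_local_left_inverse (continuousAt_YBS hk hc)
    (phi_pos _).ne' <| eventually_of_mem (isOpen_Ioo.mem_nhds hc) fun _ hu => CBS_YBS hk hu

lemma tendsto_YBS_nhdsGT_zero {k : ℝ} (hk : 0 < k) :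
    Tendsto (YBS k) (𝓝[>] 0) (𝓝[>] 0) := by
  have hpos : ∀ᶠ c in 𝓝[>] (0 : ℝ), 0 < YBS k c :=
    eventually_of_mem (Ioo_mem_nhdsGT one_pos) fun _ hc => YBS_pos hk hc
  refine tendsto_nhdsWithin_iff.2 ⟨tendsto_order.2 ⟨fun a ha => hpos.mono fun c hc => ha.trans hc,
    fun δ hδ => ?_⟩, hpos⟩
  filter_upwards [Ioo_mem_nhdsGT (CBS_pos hk hδ)] with c hc
  have hc₁ : c ∈ Ioo 0 1 := ⟨hc.1, hc.2.trans (CBS_lt_one k hδ)⟩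
  rw [← (CBS_strictMonoOn k).lt_iff_lt (YBS_pos hk hc₁) hδ, CBS_YBS hk hc₁]
  exact hc.2

noncomputable def CHat (k c : ℝ) : ℝ := CBS k (2 * k / YBS k c)

section CHat

variable {k : ℝ} (hk : 0 < k)
include hk

lemma CHat_mapsTo : MapsTo (CHat k) (Ioo 0 1) (Ioo 0 1) :=
  fun _ hc => CBS_mapsTo hk (div_pos (by positivity) (YBS_pos hk hc))

lemma YBS_CHat {c : ℝ} (hc : c ∈ Ioo 0 1) : YBS k (CHat k c) = 2 * k / YBS k c :=
  YBS_CBS hk (div_pos (by positivity) (YBS_pos hk hc))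

lemma CHat_CHat {c : ℝ} (hc : c ∈ Ioo 0 1) : CHat k (CHat k c) = c := by
  rw [CHat, YBS_CHat hk hc, div_div_cancel₀ (by positivity), CBS_YBS hk hc]

lemma hasDerivAt_CHat {c : ℝ} (hc : c ∈ Ioo 0 1) :
    HasDerivAt (CHat k) (-(2 * k) / YBS k c ^ 2) c := by
  have hy : 0 < YBS k c := YBS_pos hk hc
  have h := (hasDerivAt_CBS k (div_pos (by positivity) hy)).comp c
    (((hasDerivAt_YBS hk hc).inv hy.ne').const_mul (2 * k))
  set y := YBS k c
  have hd₁ : -k / (2 * k / y) + 2 * k / y / 2 = -(-k / y + y / 2) := by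
    field_simp
    ring
  rw [hd₁, phi_neg] at h
  refine h.congr_deriv ?_
  have hφ := phi_pos (-k / y + y / 2)
  generalize phi (-k / y + y / 2) = φ at hφ ⊢
  field_simp

lemma convexOn_CHat : ConvexOn ℝ (Ioo 0 1) (CHat k) := by
  refine MonotoneOn.convexOn_of_deriv (convex_Ioo 0 1)
    (fun c hc => (hasDerivAt_CHat hk hc).continuousAt.continuousWithinAt) ?_ ?_
  · rw [interior_Ioo]
    exact fun c hc => (hasDerivAt_CHat hk hc).differentiableAt.differentiableWithinAt
  · rw [interior_Ioo]
    intro c hc c' hc' hle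
    have hy := YBS_pos hk hc
    have hyy' := (YBS_strictMonoOn hk).monotoneOn hc hc' hle
    rw [(hasDerivAt_CHat hk hc).deriv, (hasDerivAt_CHat hk hc').deriv, neg_div, neg_div,
      neg_le_neg_iff]
    gcongr

lemma tendsto_CHat_nhdsGT_zero : Tendsto (CHat k) (𝓝[>] 0) (𝓝 1) :=
  (tendsto_CBS_atTop k).comp <| by
    simpa only [div_eq_mul_inv, Function.comp_def] using
      (tendsto_inv_nhdsGT_zero.comp (tendsto_YBS_nhdsGT_zero hk)).const_mul_atTop
        (by positivity : (0 : ℝ) < 2 * k)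

end CHat

lemma integral_eq_sub_of_hasDerivAt_of_tendsto_nhdsGT_of_nonneg {f f' : ℝ → ℝ} {a b fa : ℝ}
    (hab : a < b) (hderiv : ∀ x ∈ Ioc a b, HasDerivAt f (f' x) x)
    (hf' : ∀ x ∈ Ioo a b, 0 ≤ f' x) (ha : Tendsto f (𝓝[>] a) (𝓝 fa)) :
    ∫ x in a..b, f' x = f b - fa := by
  classical
  set F := Function.update f a fa
  have hFf : ∀ x ∈ Ioc a b, F =ᶠ[𝓝 x] f := fun x hx =>
    eventually_of_mem (Ioi_mem_nhds hx.1) fun y hy => Function.update_of_ne hy.ne' _ _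
  have hFderiv : ∀ x ∈ Ioo a b, HasDerivAt F (f' x) x := fun x hx =>
    (hderiv x (Ioo_subset_Ioc_self hx)).congr_of_eventuallyEq (hFf x (Ioo_subset_Ioc_self hx))
  have hFcont : ContinuousOn F (Icc a b) := by
    intro x hx
    rcases hx.1.eq_or_lt with rfl | hax
    · exact continuousWithinAt_update_same.2 <| ha.mono_left <| nhdsWithin_mono _
        fun y (hy : y ∈ Icc a b \ {a}) => hy.1.1.lt_of_ne' hy.2
    · exact ((hderiv x ⟨hax, hx.2⟩).continuousAt.congr
        (hFf x ⟨hax, hx.2⟩).symm).continuousWithinAt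
  have hint := (intervalIntegrable_iff_integrableOn_Ioc_of_le hab.le).2
    (intervalIntegral.integrableOn_deriv_of_nonneg hFcont hFderiv hf')
  rw [intervalIntegral.integral_eq_sub_of_hasDerivAt_of_le hab.le hFcont hFderiv hint]
  simp [F, hab.ne']

lemma integral_two_mul_div_YBS_sq {k : ℝ} (hk : 0 < k) {c : ℝ} (hc : c ∈ Ioo 0 1) :
    ∫ u in (0 : ℝ)..c, 2 * k / YBS k u ^ 2 = 1 - CHat k c := by
  have h := integral_eq_sub_of_hasDerivAt_of_tendsto_nhdsGT_of_nonneg (f := fun u => -CHat k u)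
    (f' := fun u => 2 * k / YBS k u ^ 2)
    hc.1 (fun u hu => ((hasDerivAt_CHat hk ⟨hu.1, hu.2.trans_lt hc.2⟩).neg).congr_deriv
      (by ring))
    (fun u _ => by positivity) (tendsto_CHat_nhdsGT_zero hk).neg
  rw [h]
  ring

theorem stmt_6 (k : ℝ) (hk : 0 < k) :
    ConvexOn ℝ (Set.Ioo 0 1) (fun c => 1 - ∫ u in (0:ℝ)..c, 2 * k / (YBS k u) ^ 2) ∧
    ∀ c : ℝ, 0 < c → c < 1 →
      (1 - ∫ u in (0:ℝ)..(1 - ∫ u in (0:ℝ)..c, 2 * k / (YBS k u) ^ 2),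
        2 * k / (YBS k u) ^ 2) = c := by
  have hCHat : EqOn (CHat k) (fun c => 1 - ∫ u in (0:ℝ)..c, 2 * k / (YBS k u) ^ 2) (Ioo 0 1) :=
    fun c hc => by simp only [integral_two_mul_div_YBS_sq hk hc, sub_sub_cancel]
  refine ⟨(convexOn_CHat hk).congr hCHat, fun c hc₀ hc₁ => ?_⟩
  have hc : c ∈ Ioo 0 1 := ⟨hc₀, hc₁⟩
  rw [integral_two_mul_div_YBS_sq hk hc, sub_sub_cancel,
    integral_two_mul_div_YBS_sq hk (CHat_mapsTo hk hc), sub_sub_cancel, CHat_CHat hk hc]
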